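/- arXiv:1410.3149 — 3 statements merged into one kernel-verified Lean document; each statement's English description precedes it below -/
import Mathlib

section
/- (Inverse spectral problem for arrowhead matrices) Let k ≥ 1 and let real numbers satisfy the strict interlacing λ_0 > μ_1 > λ_1 > μ_2 > λ_2 > … > μ_k > λ_k. Then there exist a unique real number t and unique positive real numbers c_1, …, c_k such that the (k+1)×(k+1) real symmetric arrowhead matrix M defined by M_{00} = t, M_{0i} = M_{i0} = c_i and M_{ii} = μ_i for 1 ≤ i ≤ k, and M_{ij} = 0 for all other entries, has eigenvalues exactly λ_0, λ_1, …, λ_k. -/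
/-!
Expanding `det (x - M)` along the Schur complement of the diagonal block gives
`charpoly M = (X - t) Q - ∑ cᵢ² Qᵢ`, where `Q = ∏ (X - μᵢ)` and `Qᵢ = Q / (X - μᵢ)`.
Both this and `P = ∏ (X - λᵢ)` are monic of degree `k + 1`, so their difference has degree
at most `k` and vanishes iff its `X^k`-coefficient and its values at the `k` nodes `μᵢ` vanish.
The coefficient condition forces `t = ∑ λᵢ - ∑ μᵢ`, and the node conditions are Lagrange
interpolation: `cᵢ² = -P(μᵢ) / Qᵢ(μᵢ)`. Under strict interlacing `P(μᵢ)` has sign `(-1)^(i+1)`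
and `Qᵢ(μᵢ)` has sign `(-1)^i`, so each `cᵢ²` is positive and `cᵢ` is its positive square root.
-/

open Polynomial

/-- The `(k+1) × (k+1)` real symmetric arrowhead matrix: tip entry `t` in position
`(0,0)`, arm entries `c₁, …, c_k` in positions `(0,i)` and `(i,0)`, diagonal entries
`μ₁, …, μ_k` in positions `(i,i)` for `1 ≤ i ≤ k`, and `0` elsewhere. -/
def arrowhead (k : ℕ) (t : ℝ) (c μ : Fin k → ℝ) :
    Matrix (Fin (k + 1)) (Fin (k + 1)) ℝ :=
  Matrix.of fun p q =>
    if hp : (p : ℕ) = 0 then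
      (if hq : (q : ℕ) = 0 then t else c ⟨(q : ℕ) - 1, by have := q.isLt; omega⟩)
    else if hq2 : (q : ℕ) = 0 then c ⟨(p : ℕ) - 1, by have := p.isLt; omega⟩
    else if hpq : p = q then μ ⟨(p : ℕ) - 1, by have := p.isLt; omega⟩
    else 0

open Matrix Finset Lagrange

/-- `inl i ↦ i.succ` and `inr () ↦ 0`: the arrow's tip becomes the last block. -/
def finSumUnitEquiv (k : ℕ) : Fin k ⊕ Unit ≃ Fin (k + 1) :=
  (Equiv.optionEquivSumPUnit (Fin k)).symm.trans (finSuccEquiv k).symm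

section ArrowheadCharpoly

variable {k : ℕ} {t x : ℝ} {c μ : Fin k → ℝ}

lemma scalar_sub_arrowhead_submatrix :
    (scalar (Fin (k + 1)) x - arrowhead k t c μ).submatrix (finSumUnitEquiv k)
      (finSumUnitEquiv k) = fromBlocks (diagonal fun i => x - μ i) (replicateCol Unit (-c))
        (replicateRow Unit (-c)) (of fun _ _ => x - t) := by
  ext (i | u) (j | v) <;>
    simp [finSumUnitEquiv, arrowhead, diagonal_apply, Fin.succ_inj, eq_comm (a := (0 : Fin _)),
      Fin.succ_ne_zero, ite_sub_ite]

lemma det_scalar_sub_arrowhead (hx : ∀ i, x ≠ μ i) :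
    (scalar (Fin (k + 1)) x - arrowhead k t c μ).det =
      (x - t) * ∏ i, (x - μ i) - ∑ i, c i ^ 2 * ∏ j ∈ univ.erase i, (x - μ j) := by
  have hne : ∀ i, x - μ i ≠ 0 := fun i => sub_ne_zero.mpr (hx i)
  let : Invertible (diagonal fun i => x - μ i) :=
    invertibleOfRightInverse _ (diagonal fun i => (x - μ i)⁻¹) <| by
      simp [diagonal_mul_diagonal, mul_inv_cancel₀ (hne _)]
  rw [← det_submatrix_equiv_self (finSumUnitEquiv k), scalar_sub_arrowhead_submatrix,
    det_fromBlocks₁₁, det_diagonal, det_unique,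
    show ⅟(diagonal fun i => x - μ i) = diagonal fun i => (x - μ i)⁻¹ from rfl]
  simp only [Matrix.sub_apply, of_apply, mul_apply, replicateRow_apply, replicateCol_apply,
    diagonal_apply, Pi.neg_apply, mul_ite, mul_zero, sum_ite_eq', mem_univ, if_true,
    mul_sub, mul_sum]
  congr 1
  · ring
  refine sum_congr rfl fun j _ => ?_
  rw [← mul_prod_erase univ _ (mem_univ j)]
  field_simp [hne j]

lemma charpoly_arrowhead :
    (arrowhead k t c μ).charpoly =
      (X - C t) * nodal univ μ - ∑ i, C (c i ^ 2) * nodal (univ.erase i) μ := by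
  refine eq_of_infinite_eval_eq _ _ ((Set.finite_range μ).infinite_compl.mono fun x hx => ?_)
  rw [Set.mem_ofPred_eq, eval_charpoly, det_scalar_sub_arrowhead fun i h => hx ⟨i, h.symm⟩]
  simp [eval_finsetSum, eval_nodal]

end ArrowheadCharpoly

section NodalDifference

variable {R : Type*} [CommRing R] [Nontrivial R] {n : ℕ} (a b : Fin (n + 1) → R)

lemma coeff_nodal_univ_fin_succ_top : (nodal univ a).coeff (n + 1) = 1 := by
  simpa [natDegree_nodal] using (nodal_monic (s := univ) (v := a)).coeff_natDegree

lemma coeff_nodal_univ_fin_succ : (nodal univ a).coeff n = -∑ i, a i := by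
  have h := prod_X_sub_C_nextCoeff (s := univ) a
  rwa [← nodal_eq, nextCoeff_of_natDegree_pos (by simp [natDegree_nodal]), natDegree_nodal,
    card_univ, Fintype.card_fin, Nat.add_sub_cancel] at h

lemma natDegree_nodal_sub_nodal_le : (nodal univ a - nodal univ b).natDegree ≤ n := by
  refine natDegree_le_iff_coeff_eq_zero.mpr fun m hm => ?_
  rcases (Nat.succ_le_of_lt hm).eq_or_lt with rfl | hm
  · simp [coeff_nodal_univ_fin_succ_top]
  · rw [coeff_sub, coeff_eq_zero_of_natDegree_lt, coeff_eq_zero_of_natDegree_lt, sub_zero] <;>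
      simpa [natDegree_nodal] using hm

lemma coeff_nodal_sub_nodal : (nodal univ a - nodal univ b).coeff n = ∑ i, b i - ∑ i, a i := by
  rw [coeff_sub, coeff_nodal_univ_fin_succ, coeff_nodal_univ_fin_succ, neg_sub_neg]

end NodalDifference

lemma eq_zero_iff_coeff_eq_zero_and_eval_eq_zero {R : Type*} [CommRing R] [IsDomain R]
    {ι : Type*} [Fintype ι] {v : ι → R} (hv : Function.Injective v) {f : R[X]}
    (hf : f.natDegree ≤ Fintype.card ι) :
    f = 0 ↔ f.coeff (Fintype.card ι) = 0 ∧ ∀ i, f.eval (v i) = 0 := by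
  refine ⟨fun h => by simp [h], fun ⟨hcoeff, heval⟩ => ?_⟩
  by_contra hf0
  refine hf0 (eq_zero_of_natDegree_lt_card_of_eval_eq_zero f hv heval (hf.lt_of_ne fun h => ?_))
  exact hf0 (leadingCoeff_eq_zero.mp (by rwa [leadingCoeff, h]))

section Interpolation

variable {F : Type*} [Field F] {k : ℕ} {μ : Fin k → F}

lemma natDegree_C_mul_nodal_erase_lt (a : F) (i : Fin k) :
    (C a * nodal (univ.erase i) μ).natDegree < k := by
  refine (natDegree_C_mul_le _ _).trans_lt ?_
  rw [natDegree_nodal, card_erase_of_mem (mem_univ i), card_univ, Fintype.card_fin]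
  exact Nat.sub_lt i.pos one_pos

lemma eval_sum_C_mul_nodal_erase (v : Fin k → F) (i : Fin k) :
    (∑ j, C (v j) * nodal (univ.erase j) μ).eval (μ i) =
      v i * (nodal (univ.erase i) μ).eval (μ i) := by
  rw [eval_finsetSum, sum_eq_single i (fun j _ hji => ?_) (by simp), eval_mul, eval_C]
  rw [eval_mul, eval_nodal_at_node (mem_erase.mpr ⟨Ne.symm hji, mem_univ i⟩), mul_zero]

lemma sub_sum_C_mul_nodal_erase_eq_nodal_iff (hμ : Function.Injective μ)
    (lam : Fin (k + 1) → F) (t : F) (v : Fin k → F) :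
    (X - C t) * nodal univ μ - ∑ i, C (v i) * nodal (univ.erase i) μ = nodal univ lam ↔
      t = ∑ i, lam i - ∑ i, μ i ∧
        ∀ i, v i = -(nodal univ lam).eval (μ i) * nodalWeight univ μ i := by
  have hcons : (X - C t) * nodal univ μ = nodal univ (Fin.cons t μ : Fin (k + 1) → F) := by
    simp [nodal, Fin.prod_univ_succ]
  have hsum : ∀ i, (C (v i) * nodal (univ.erase i) μ).natDegree < k := fun i =>
    natDegree_C_mul_nodal_erase_lt (v i) i
  rw [← sub_eq_zero, hcons, sub_right_comm, eq_zero_iff_coeff_eq_zero_and_eval_eq_zero hμ,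
    Fintype.card_fin]
  · refine and_congr ?_ (forall_congr' fun i => ?_)
    · rw [coeff_sub, coeff_nodal_sub_nodal, finsetSum_coeff,
        sum_eq_zero fun i _ => coeff_eq_zero_of_natDegree_lt (hsum i), Fin.sum_cons]
      constructor <;> intro h <;> linear_combination -h
    · have hi := eval_nodal_not_at_node (s := univ.erase i) (x := μ i) fun j hj =>
        hμ.ne (mem_erase.mp hj).1.symm
      rw [eval_sub, eval_sub, eval_sum_C_mul_nodal_erase, nodalWeight_eq_eval_nodal_erase_inv,
        eq_mul_inv_iff_mul_eq₀ hi]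
      have heval_cons : eval (μ i) (nodal univ (Fin.cons t μ : Fin (k + 1) → F)) = 0 :=
        eval_nodal_at_node (v := Fin.cons t μ) (mem_univ i.succ)
      rw [heval_cons, zero_sub]
      constructor <;> intro h <;> linear_combination -h
  · rw [Fintype.card_fin]
    exact (natDegree_sub_le_of_le (natDegree_nodal_sub_nodal_le _ _)
      (natDegree_sum_le_of_forall_le _ _ fun i _ => (hsum i).le)).trans_eq (max_self k)

end Interpolation

lemma neg_one_pow_card_mul_eval_nodal_pos {K ι : Type*} [Field K] [LinearOrder K]
    [IsStrictOrderedRing K] {s : Finset ι} {v : ι → K} {x : K} (hx : ∀ j ∈ s, x ≠ v j) :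
    0 < (-1) ^ #{j ∈ s | x < v j} * (nodal s v).eval x := by
  rw [eval_nodal, ← prod_const, prod_filter, ← prod_mul_distrib]
  refine prod_pos fun j hj => ?_
  split_ifs with hxj
  · linarith
  · linarith [lt_of_le_of_ne (not_lt.mp hxj) (hx j hj).symm]

def StrictlyInterlaces {k : ℕ} (lam : Fin (k + 1) → ℝ) (μ : Fin k → ℝ) : Prop :=
  ∀ i : Fin k, lam i.castSucc > μ i ∧ μ i > lam i.succ

namespace StrictlyInterlaces

variable {k : ℕ} {lam : Fin (k + 1) → ℝ} {μ : Fin k → ℝ} (h : StrictlyInterlaces lam μ)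
include h

lemma strictAnti_left : StrictAnti lam :=
  Fin.strictAnti_iff_succ_lt.mpr fun i => (h i).2.trans (h i).1

lemma strictAnti_right : StrictAnti μ := fun i j hij =>
  calc μ j < lam j.castSucc := (h j).1
    _ ≤ lam i.succ := h.strictAnti_left.antitone (Fin.castSucc_lt_iff_succ_le.mp
      (Fin.castSucc_lt_castSucc_iff.mpr hij))
    _ < μ i := (h i).2

lemma lt_left_iff (i : Fin k) (m : Fin (k + 1)) : μ i < lam m ↔ m < i.succ := by
  refine ⟨fun hm => lt_of_not_ge fun him => ?_, fun hm => ?_⟩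
  · exact absurd ((h i).2.trans hm) (not_lt.mpr (h.strictAnti_left.antitone him))
  · exact (h i).1.trans_le (h.strictAnti_left.antitone (Fin.le_castSucc_iff.mpr hm))

lemma ne_left (i : Fin k) (m : Fin (k + 1)) : μ i ≠ lam m := by
  rcases lt_or_ge m i.succ with hm | hm
  · exact ((h.lt_left_iff i m).mpr hm).ne
  · exact ((h.strictAnti_left.antitone hm).trans_lt (h i).2).ne'

lemma card_lt_left (i : Fin k) : #{m | μ i < lam m} = i + 1 := by
  simp_rw [h.lt_left_iff i, filter_gt_eq_Iio, Fin.card_Iio, Fin.val_succ]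

lemma card_lt_right (i : Fin k) : #{j ∈ univ.erase i | μ i < μ j} = i := by
  simp_rw [h.strictAnti_right.lt_iff_gt, filter_erase, filter_gt_eq_Iio]
  rw [erase_eq_of_notMem (by simp), Fin.card_Iio]

lemma weight_pos (i : Fin k) :
    0 < -(nodal univ lam).eval (μ i) * nodalWeight univ μ i := by
  set P := (nodal univ lam).eval (μ i)
  set Q := (nodal (univ.erase i) μ).eval (μ i)
  have hP : 0 < (-1) ^ ((i : ℕ) + 1) * P := by
    simpa only [h.card_lt_left] using
      neg_one_pow_card_mul_eval_nodal_pos (s := univ) fun m _ => h.ne_left i m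
  have hQ : 0 < (-1) ^ (i : ℕ) * Q := by
    simpa only [h.card_lt_right] using
      neg_one_pow_card_mul_eval_nodal_pos (s := univ.erase i) fun j hj =>
        h.strictAnti_right.injective.ne (mem_erase.mp hj).1.symm
  have hsign : ((-1 : ℝ) ^ ((i : ℕ) + 1)) * (-1) ^ (i : ℕ) = -1 := by
    rw [← pow_add]; exact Odd.neg_one_pow ⟨i, by ring⟩
  have hPQ : 0 < -P * Q := by linear_combination mul_pos hP hQ + P * Q * hsign
  rw [nodalWeight_eq_eval_nodal_erase_inv, ← div_eq_mul_inv]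
  exact div_pos_iff.mpr (mul_pos_iff.mp hPQ)

end StrictlyInterlaces

theorem arrowhead_inverse_spectral_general (k : ℕ)
    (lam : Fin (k + 1) → ℝ) (μ : Fin k → ℝ)
    (hinterlace : ∀ i : Fin k, lam i.castSucc > μ i ∧ μ i > lam i.succ) :
    ∃! tc : ℝ × (Fin k → ℝ),
      (∀ i, 0 < tc.2 i) ∧
      (arrowhead k tc.1 tc.2 μ).charpoly = ∏ i, (X - C (lam i)) := by
  have h : StrictlyInterlaces lam μ := hinterlace
  set w : Fin k → ℝ := fun i => -(nodal univ lam).eval (μ i) * nodalWeight univ μ i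
  have hw : ∀ i, 0 < w i := h.weight_pos
  have hcharpoly : ∀ t c, (arrowhead k t c μ).charpoly = ∏ i, (X - C (lam i)) ↔
      t = ∑ i, lam i - ∑ i, μ i ∧ ∀ i, c i ^ 2 = w i := fun t c => by
    rw [charpoly_arrowhead, ← nodal_eq]
    exact sub_sum_C_mul_nodal_erase_eq_nodal_iff h.strictAnti_right.injective lam t _
  refine ⟨(∑ i, lam i - ∑ i, μ i, fun i => √(w i)), ⟨fun i => Real.sqrt_pos.mpr (hw i),
    (hcharpoly _ _).mpr ⟨rfl, fun i => Real.sq_sqrt (hw i).le⟩⟩, ?_⟩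
  rintro ⟨t, c⟩ ⟨hc, hcp⟩
  obtain ⟨rfl, hcw⟩ := (hcharpoly t c).mp hcp
  exact Prod.ext rfl (funext fun i => show c i = √(w i) by rw [← hcw i, Real.sqrt_sq (hc i).le])

/-- Inverse spectral problem for arrowhead matrices: given strictly interlacing data
`λ₀ > μ₁ > λ₁ > … > μ_k > λ_k`, there are a unique `t ∈ ℝ` and unique positive
`c₁, …, c_k` such that the arrowhead matrix with tip `t`, arms `cᵢ` and diagonal `μᵢ`
has characteristic polynomial `∏ᵢ (x - λᵢ)`. -/
theorem arrowhead_inverse_spectral (k : ℕ) (hk : 1 ≤ k)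
    (lam : Fin (k + 1) → ℝ) (μ : Fin k → ℝ)
    (hinterlace : ∀ i : Fin k, lam i.castSucc > μ i ∧ μ i > lam i.succ) :
    ∃! tc : ℝ × (Fin k → ℝ),
      (∀ i, 0 < tc.2 i) ∧
      (arrowhead k tc.1 tc.2 μ).charpoly = ∏ i, (X - C (lam i)) :=
  arrowhead_inverse_spectral_general k lam μ hinterlace
end

section
/- Let n ≥ 1, let 0 < q ≤ 1, and let μ_1 ≥ μ_2 ≥ … ≥ μ_n > 0 be positive reals satisfying μ_{j+1} ≤ q·μ_j for all 1 ≤ j ≤ n−1. Then for every 1 ≤ i ≤ n the i-th elementary symmetric polynomial of μ_1, …, μ_n is dominated by its leading term: ∏_{j=1}^{i} μ_j ≤ e_i(μ_1, …, μ_n) ≤ (1 + 2^n·q)·∏_{j=1}^{i} μ_j. -/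
/-- If `μ₁ ≥ … ≥ μ_n > 0` with `μ_{j+1} ≤ q·μ_j` for `0 < q ≤ 1`, then for every
`1 ≤ i ≤ n` the `i`-th elementary symmetric polynomial of the `μ`'s is dominated by
its leading term `μ₁⋯μᵢ`:
`μ₁⋯μᵢ ≤ eᵢ(μ₁, …, μ_n) ≤ (1 + 2ⁿ·q)·μ₁⋯μᵢ`. -/
theorem esymm_dominated_by_leading_term (n : ℕ) (hn : 1 ≤ n) (q : ℝ)
    (hq0 : 0 < q) (hq1 : q ≤ 1) (μ : Fin n → ℝ)
    (hpos : ∀ j, 0 < μ j) (hdec : Antitone μ)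
    (hratio : ∀ (j : Fin n) (h : (j : ℕ) + 1 < n), μ ⟨(j : ℕ) + 1, h⟩ ≤ q * μ j)
    (i : ℕ) (hi1 : 1 ≤ i) (hin : i ≤ n) :
    (∏ j : Fin i, μ (Fin.castLE hin j)) ≤
        (∑ S ∈ Finset.powersetCard i (Finset.univ : Finset (Fin n)), ∏ j ∈ S, μ j) ∧
    (∑ S ∈ Finset.powersetCard i (Finset.univ : Finset (Fin n)), ∏ j ∈ S, μ j) ≤
        (1 + 2 ^ n * q) * ∏ j : Fin i, μ (Fin.castLE hin j) := by
  set P : ℝ := ∏ j : Fin i, μ (Fin.castLE hin j) with hP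
  have hPpos : 0 < P := Finset.prod_pos fun j _ => hpos _
  set S0 : Finset (Fin n) := Finset.image (Fin.castLE hin) Finset.univ with hS0
  have hS0card : S0.card = i := by
    rw [hS0, Finset.card_image_of_injective _ (Fin.castLE_injective hin), Finset.card_univ,
      Fintype.card_fin]
  have hS0mem : S0 ∈ Finset.powersetCard i (Finset.univ : Finset (Fin n)) := by
    rw [Finset.mem_powersetCard]
    exact ⟨Finset.subset_univ _, hS0card⟩
  have hS0prod : ∏ j ∈ S0, μ j = P := by
    rw [hS0, Finset.prod_image]
    intro a _ b _ h
    exact Fin.castLE_injective hin h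
  -- every term is nonnegative
  have hnonneg : ∀ S ∈ Finset.powersetCard i (Finset.univ : Finset (Fin n)),
      (0:ℝ) ≤ ∏ j ∈ S, μ j := fun S _ => Finset.prod_nonneg fun j _ => (hpos j).le
  -- key: non-leading terms are ≤ q * P
  have key : ∀ S ∈ Finset.powersetCard i (Finset.univ : Finset (Fin n)), S ≠ S0 →
      ∏ j ∈ S, μ j ≤ q * P := by
    intro S hS hne
    rw [Finset.mem_powersetCard] at hS
    obtain ⟨-, hcard⟩ := hS
    set e := S.orderIsoOfFin hcard with he
    have hprodS : ∏ j ∈ S, μ j = ∏ k : Fin i, μ (e k) := by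
      rw [← Finset.prod_coe_sort S μ]
      exact (Fintype.prod_equiv e.toEquiv _ _ fun k => rfl).symm
    -- k ≤ e k
    have hle : ∀ k : ℕ, ∀ hk : k < i, k ≤ ((e ⟨k, hk⟩ : Fin n) : ℕ) := by
      intro k
      induction k with
      | zero => intro hk; exact Nat.zero_le _
      | succ m ih =>
        intro hk
        have hm : m < i := Nat.lt_of_succ_lt hk
        have h1 := ih hm
        have h2 : (e ⟨m, hm⟩ : Fin n) < (e ⟨m+1, hk⟩ : Fin n) := by
          have := e.strictMono (show (⟨m, hm⟩ : Fin i) < ⟨m+1, hk⟩ by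
            simp [Fin.lt_def])
          exact this
        have : ((e ⟨m, hm⟩ : Fin n) : ℕ) < ((e ⟨m+1, hk⟩ : Fin n) : ℕ) := h2
        omega
    -- each factor is ≤ corresponding leading factor
    have hfac : ∀ k : Fin i, μ (e k) ≤ μ (Fin.castLE hin k) := by
      intro k
      apply hdec
      have := hle k k.isLt
      simp only [Fin.le_def, Fin.coe_castLE]
      simpa using this
    -- exists a strict one
    have hstrict : ∃ k : Fin i, (k : ℕ) < ((e k : Fin n) : ℕ) := by
      by_contra hcon
      push_neg at hcon
      apply hne
      have heq : ∀ k : Fin i, (e k : Fin n) = Fin.castLE hin k := by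
        intro k
        have h1 : (k:ℕ) ≤ ((e k : Fin n) : ℕ) := by simpa using hle k k.isLt
        have h2 := hcon k
        apply Fin.ext
        simp only [Fin.coe_castLE]
        omega
      apply Finset.eq_of_subset_of_card_le
      · intro x hx
        rw [hS0, Finset.mem_image]
        have : x ∈ S := hx
        obtain ⟨k, hk⟩ := e.surjective ⟨x, this⟩
        exact ⟨k, Finset.mem_univ _, by rw [← heq k, hk]⟩
      · rw [hS0card, hcard]
    obtain ⟨k0, hk0⟩ := hstrict
    -- μ (e k0) ≤ q * μ (castLE k0)
    have hk0n : (k0 : ℕ) + 1 < n := by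
      have : ((e k0 : Fin n) : ℕ) < n := (e k0 : Fin n).isLt
      omega
    have hfac0 : μ (e k0) ≤ q * μ (Fin.castLE hin k0) := by
      have h1 : μ (e k0) ≤ μ ⟨(k0 : ℕ) + 1, hk0n⟩ := by
        apply hdec
        simp only [Fin.le_def]
        exact hk0
      have h2 : μ ⟨(k0 : ℕ) + 1, hk0n⟩ ≤ q * μ (Fin.castLE hin k0) := by
        have := hratio (Fin.castLE hin k0) (by simpa using hk0n)
        simpa using this
      linarith
    -- combine
    rw [hprodS]
    calc ∏ k : Fin i, μ (e k)
        ≤ ∏ k : Fin i, (if k = k0 then q * μ (Fin.castLE hin k) else μ (Fin.castLE hin k)) := by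
          apply Finset.prod_le_prod
          · intro k _; exact (hpos _).le
          · intro k _
            by_cases h : k = k0
            · simp only [h, if_pos rfl]; exact h ▸ hfac0
            · simp only [if_neg h]; exact hfac k
      _ = q * P := by
          rw [← Finset.mul_prod_erase Finset.univ _ (Finset.mem_univ k0), if_pos rfl, hP,
            ← Finset.mul_prod_erase Finset.univ (fun k => μ (Fin.castLE hin k))
              (Finset.mem_univ k0), mul_assoc]
          congr 1
          congr 1
          apply Finset.prod_congr rfl
          intro k hk
          rw [if_neg (Finset.mem_erase.mp hk).1]
  constructor
  · rw [← hS0prod]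
    exact Finset.single_le_sum hnonneg hS0mem
  · rw [← Finset.add_sum_erase _ _ hS0mem, hS0prod]
    have hcount : ((Finset.powersetCard i (Finset.univ : Finset (Fin n))).erase S0).card ≤ 2 ^ n := by
      calc ((Finset.powersetCard i (Finset.univ : Finset (Fin n))).erase S0).card
          ≤ (Finset.powersetCard i (Finset.univ : Finset (Fin n))).card :=
            Finset.card_le_card (Finset.erase_subset _ _)
        _ ≤ (Finset.univ : Finset (Fin n)).powerset.card :=
            Finset.card_le_card (fun S hS =>
              Finset.mem_powerset.mpr (Finset.mem_powersetCard.mp hS).1)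
        _ = 2 ^ n := by rw [Finset.card_powerset, Finset.card_univ, Fintype.card_fin]
    have hsum : ∑ S ∈ (Finset.powersetCard i (Finset.univ : Finset (Fin n))).erase S0,
        ∏ j ∈ S, μ j ≤ 2 ^ n * q * P := by
      calc ∑ S ∈ (Finset.powersetCard i (Finset.univ : Finset (Fin n))).erase S0, ∏ j ∈ S, μ j
          ≤ ∑ _S ∈ (Finset.powersetCard i (Finset.univ : Finset (Fin n))).erase S0, q * P := by
            apply Finset.sum_le_sum
            intro S hS
            exact key S (Finset.mem_of_mem_erase hS) (Finset.ne_of_mem_erase hS)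
        _ = ((Finset.powersetCard i (Finset.univ : Finset (Fin n))).erase S0).card * (q * P) := by
            rw [Finset.sum_const, nsmul_eq_mul]
        _ ≤ 2 ^ n * (q * P) := by
            apply mul_le_mul_of_nonneg_right _ (by positivity)
            exact_mod_cast hcount
        _ = 2 ^ n * q * P := by ring
    linarith
end

section
/- (Poisson commutativity of the Gelfand–Zeitlin system, Guillemin–Sternberg) Fix a positive integer n. Let K be an n×n complex Hermitian matrix such that for every 1 ≤ k ≤ n the principal submatrix K^{(k)} has k distinct eigenvalues. Then for all 1 ≤ i ≤ k ≤ n and 1 ≤ j ≤ m ≤ n, the functions f = l^k_i and g = l^m_j (where l^k_i(X) = l_i(X^{(k)}) on the real vector space of n×n Hermitian matrices) are differentiable at K, and their Kirillov–Kostant–Souriau Poisson bracket vanishes at K: Im Tr( K · [∇f(K), ∇g(K)] ) = 0, where [·,·] is the matrix commutator. -/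
open Matrix

/-- The eigenvalues of a Hermitian matrix, listed in decreasing order:
`eigsDesc hA 0 = λ₁ ≥ eigsDesc hA 1 = λ₂ ≥ …`. -/
noncomputable def eigsDesc {n : ℕ} {A : Matrix (Fin n) (Fin n) ℂ} (hA : A.IsHermitian) :
    Fin n → ℝ :=
  fun i => hA.eigenvalues (Tuple.sort hA.eigenvalues i.rev)
/-- `lMap hA i = λ₁ + … + λ_{i+1}`, the partial sums of the decreasingly ordered
eigenvalues of a Hermitian matrix (`i : Fin n` represents the index `i+1`). -/
noncomputable def lMap {n : ℕ} {A : Matrix (Fin n) (Fin n) ℂ} (hA : A.IsHermitian) :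
    Fin n → ℝ :=
  fun i => ∑ j ∈ Finset.Iic i, eigsDesc hA j

open scoped Classical in
/-- The Gelfand–Zeitlin function `lᵏᵢ(X) = lᵢ(X^{(k)})`, defined (as a total function
on matrices) whenever `1 ≤ i ≤ k ≤ n` and the principal submatrix `X^{(k)}` is
Hermitian, and `0` otherwise. -/
noncomputable def lki {n : ℕ} (k i : ℕ) (X : Matrix (Fin n) (Fin n) ℂ) : ℝ :=
  if h : 1 ≤ i ∧ i ≤ k ∧ k ≤ n then
    if hX : (X.submatrix (Fin.castLE h.2.2) (Fin.castLE h.2.2)).IsHermitian then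
      lMap hX ⟨i - 1, by omega⟩
    else 0
  else 0

/-- `G` is the gradient of `f` at the Hermitian matrix `K`, in the sense of the
Kirillov–Kostant–Souriau formalism: `G` is Hermitian and for every Hermitian
direction `X`, `(d/dt)|₀ f(K + tX) = Re Tr(G·X)`. -/
def IsHermGradientAt {n : ℕ} (f : Matrix (Fin n) (Fin n) ℂ → ℝ)
    (K G : Matrix (Fin n) (Fin n) ℂ) : Prop :=
  G.IsHermitian ∧
  ∀ X : Matrix (Fin n) (Fin n) ℂ, X.IsHermitian →
    HasDerivAt (fun t : ℝ => f (K + t • X)) ((G * X).trace.re) 0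

/-!
At a Hermitian matrix with simple spectrum every eigenvalue is a differentiable function of the
matrix: it is a simple root of the characteristic polynomial, so the implicit function theorem
applies, and in the eigenbasis the derivative in the direction `B` is the diagonal entry `⟨v, B v⟩`
of the corresponding unit eigenvector `v`. Summing, the gradient of `lᵏᵢ` is `E P Eᴴ`, where `P`
is the spectral projection of `K^{(k)}` onto its top `i` eigenvectors and `E` is the inclusion
of the first `k` coordinates. For `k ≤ m` both gradients live in the top-left `m × m` block,
where the gradient of `lᵐⱼ` commutes with `K^{(m)}`; cyclicity of the trace then kills
`Tr (K [∇f, ∇g])`.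
-/

open Filter Topology

theorem ContDiffAt.exists_implicitFunction {P : ℝ × ℝ → ℝ} {u : ℝ × ℝ} {a b : ℝ}
    (hP : ContDiffAt ℝ 1 P u) (ha : HasDerivAt (fun t => P (t, u.2)) a u.1)
    (hb : HasDerivAt (fun x => P (u.1, x)) b u.2) (hb₀ : b ≠ 0) :
    ∃ ψ : ℝ → ℝ, ψ u.1 = u.2 ∧ HasDerivAt ψ (-a / b) u.1 ∧
      ∀ᶠ t in 𝓝 u.1, P (t, ψ t) = P u := by
  set L := fderiv ℝ P u
  have hL : HasStrictFDerivAt P L u := hP.hasStrictFDerivAt one_ne_zero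
  have hLa : L (1, 0) = a :=
    (hL.hasFDerivAt.comp_hasDerivAt u.1 ((hasDerivAt_id _).prodMk (hasDerivAt_const _ _))).unique ha
  have hLb : L (0, 1) = b :=
    (hL.hasFDerivAt.comp_hasDerivAt u.2 ((hasDerivAt_const _ _).prodMk (hasDerivAt_id _))).unique hb
  have hL₂ : L ∘L .inr ℝ ℝ ℝ = ContinuousLinearEquiv.unitsEquivAut ℝ (.mk0 b hb₀) :=
    ContinuousLinearMap.ext_ring (by simp [hLb])
  have hinv : (L ∘L .inr ℝ ℝ ℝ).IsInvertible := hL₂ ▸ ⟨_, rfl⟩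
  refine ⟨hL.implicitFunctionOfProdDomain hinv,
    (hL.eventually_apply_eq_iff_implicitFunctionOfProdDomain hinv).self_of_nhds.mp rfl,
    ?_, hL.eventually_apply_implicitFunctionOfProdDomain hinv⟩
  refine (hL.hasStrictFDerivAt_implicitFunctionOfProdDomain hinv).hasFDerivAt.hasDerivAt
    |>.congr_deriv ?_
  simp [hL₂, hLa, ContinuousLinearMap.inverse_equiv, ContinuousLinearEquiv.unitsEquivAut_apply_symm,
    div_eq_mul_inv]

theorem eventually_strictMono_of_continuousAt {ι X Y : Type*} [Finite ι] [Preorder ι]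
    [TopologicalSpace X] [TopologicalSpace Y] [LinearOrder Y] [OrderClosedTopology Y]
    {φ : ι → X → Y} {x₀ : X} (hφ : ∀ q, ContinuousAt (φ q) x₀)
    (h₀ : StrictMono fun q => φ q x₀) : ∀ᶠ x in 𝓝 x₀, StrictMono fun q => φ q x := by
  have hpair : ∀ a b, ∀ᶠ x in 𝓝 x₀, a < b → φ a x < φ b x := fun a b => by
    by_cases hab : a < b
    · exact ((hφ a).eventually_lt (hφ b) (h₀ hab)).mono fun _ h _ => h
    · exact .of_forall fun _ h => absurd h hab
  filter_upwards [eventually_all.2 fun a => eventually_all.2 (hpair a)] with x hx a b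
  exact hx a b

theorem hasDerivAt_prod_sub {ι : Type*} [Fintype ι] [DecidableEq ι] (l : ι → ℝ) (s : ι) :
    HasDerivAt (fun x => ∏ j, (x - l j)) (∏ j ∈ Finset.univ.erase s, (l s - l j)) (l s) := by
  refine (HasDerivAt.fun_finsetProd (u := Finset.univ) (f' := fun _ => 1)
    fun j _ => (hasDerivAt_id (l s)).sub_const (l j)).congr_deriv ?_
  rw [Finset.sum_eq_single s]
  · simp
  · intro j _ hj
    rw [smul_eq_mul, mul_one]
    exact Finset.prod_eq_zero (Finset.mem_erase.2 ⟨Ne.symm hj, Finset.mem_univ s⟩) (sub_self (l s))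
  · simp

section Jacobi

variable {𝕜 R ι : Type*} [NontriviallyNormedField 𝕜] [NormedCommRing R] [NormedAlgebra 𝕜 R]
  [Fintype ι] [DecidableEq ι]

theorem Matrix.trace_adjugate_mul (M N : Matrix ι ι R) :
    (M.adjugate * N).trace = ∑ i, (M.updateCol i fun r => N r i).det := by
  simp only [trace, diag_apply, ← cramer_apply, cramer_eq_adjugate_mulVec, mulVec, dotProduct,
    mul_apply]

theorem Matrix.det_updateCol_eq_sum (M : Matrix ι ι R) (i : ι) (b : ι → R) :
    (M.updateCol i b).det =
      ∑ σ : Equiv.Perm ι, (σ.sign : R) * (∏ j ∈ Finset.univ.erase i, M (σ j) j) * b (σ i) := by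
  rw [det_apply']
  refine Finset.sum_congr rfl fun σ _ => ?_
  rw [← Finset.prod_erase_mul Finset.univ (fun j => M.updateCol i b (σ j) j) (Finset.mem_univ i),
    updateCol_self, mul_assoc]
  congr 2
  exact Finset.prod_congr rfl fun j hj => by rw [updateCol_ne (Finset.ne_of_mem_erase hj)]

theorem Matrix.hasDerivAt_det_add_smul (M N : Matrix ι ι R) :
    HasDerivAt (fun t : 𝕜 => (M + t • N).det) (M.adjugate * N).trace 0 := by
  simp only [trace_adjugate_mul, det_updateCol_eq_sum, det_apply' (M + _ • N)]
  rw [Finset.sum_comm]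
  refine HasDerivAt.fun_sum fun σ _ => ?_
  have hprod := HasDerivAt.fun_finsetProd (u := Finset.univ) (x := (0 : 𝕜))
    (f := fun j t => (M + t • N) (σ j) j) (f' := fun j => N (σ j) j)
    fun j _ => by simpa using ((hasDerivAt_id (0 : 𝕜)).smul_const (N (σ j) j)).const_add (M (σ j) j)
  simpa [Finset.mul_sum, mul_assoc] using hprod.const_mul (σ.sign : R)

theorem Matrix.hasDerivAt_det_diagonal_add_smul {d : ι → R} {s : ι} (hd : d s = 0)
    (N : Matrix ι ι R) :
    HasDerivAt (fun t : 𝕜 => (diagonal d + t • N).det)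
      ((∏ j ∈ Finset.univ.erase s, d j) * N s s) 0 := by
  refine (hasDerivAt_det_add_smul (diagonal d) N).congr_deriv ?_
  rw [adjugate_diagonal, trace, Finset.sum_eq_single s]
  · simp
  · intro j _ hj
    simp [Finset.prod_eq_zero (Finset.mem_erase.2 ⟨Ne.symm hj, Finset.mem_univ s⟩) hd]
  · simp

end Jacobi

section Eigenvalues

variable {ι : Type*} [Fintype ι] [DecidableEq ι]

theorem contDiff_re_eval_charpoly_add_smul {n : WithTop ℕ∞} (A B : Matrix ι ι ℂ) :
    ContDiff ℝ n fun q : ℝ × ℝ => ((A + q.1 • B).charpoly.eval (q.2 : ℂ)).re := by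
  simp only [eval_charpoly, det_apply', scalar_apply, ← smul_one_eq_diagonal, Matrix.sub_apply,
    Matrix.add_apply, Matrix.smul_apply]
  have : ContDiff ℝ n fun x : ℝ => (x : ℂ) := Complex.ofRealCLM.contDiff
  exact Complex.reCLM.contDiff.comp (by fun_prop)

variable {A : Matrix ι ι ℂ} (hA : A.IsHermitian)

noncomputable def Matrix.IsHermitian.eigenproj (s : ι) : Matrix ι ι ℂ :=
  Unitary.conjStarAlgAut ℂ _ hA.eigenvectorUnitary (diagonal (Pi.single s 1))

theorem Matrix.IsHermitian.commute_eigenproj (s : ι) : Commute A (hA.eigenproj s) := by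
  conv_lhs => rw [hA.spectral_theorem]
  exact (commute_diagonal _ _).map _

theorem Matrix.IsHermitian.isHermitian_eigenproj (s : ι) : (hA.eigenproj s).IsHermitian := by
  rw [isHermitian_iff_isSelfAdjoint]
  refine IsSelfAdjoint.map ?_ _
  rw [← isHermitian_iff_isSelfAdjoint]
  exact isHermitian_diagonal_of_self_adjoint _ (by simp [IsSelfAdjoint, Pi.star_single])

theorem Matrix.IsHermitian.trace_eigenproj_mul (s : ι) (B : Matrix ι ι ℂ) :
    (hA.eigenproj s * B).trace =
      (star (hA.eigenvectorUnitary : Matrix ι ι ℂ) * B * hA.eigenvectorUnitary) s s := by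
  rw [eigenproj, Unitary.conjStarAlgAut_apply, trace_mul_cycle, trace_mul_comm]
  simp only [← Matrix.mul_assoc]
  simp [trace, mul_diagonal, Pi.single_apply]

theorem Matrix.IsHermitian.eval_charpoly_add_smul (B : Matrix ι ι ℂ) (t : ℝ) (x : ℂ) :
    (A + t • B).charpoly.eval x =
      (diagonal (fun j => x - hA.eigenvalues j) +
        t • -(star (hA.eigenvectorUnitary : Matrix ι ι ℂ) * B * hA.eigenvectorUnitary)).det := by
  set U := hA.eigenvectorUnitary
  have hD : diagonal (fun j => x - hA.eigenvalues j) =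
      algebraMap ℂ _ x - diagonal (RCLike.ofReal ∘ hA.eigenvalues) := by
    rw [algebraMap_eq_diagonal, diagonal_sub]; rfl
  have hconj : scalar ι x - (A + t • B) = (U : Matrix ι ι ℂ) *
      (diagonal (fun j => x - hA.eigenvalues j) + t • -(star (U : Matrix ι ι ℂ) * B * U)) *
        star (U : Matrix ι ι ℂ) := by
    simp only [← Complex.coe_smul t]
    rw [← Unitary.conjStarAlgAut_apply (S := ℂ), ← Unitary.conjStarAlgAut_symm_apply (S := ℂ),
      map_add, map_smul, map_neg, StarAlgEquiv.apply_symm_apply, hD, map_sub,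
      AlgEquivClass.commutes, ← hA.spectral_theorem, scalar_apply, algebraMap_eq_diagonal,
      smul_neg, ← sub_eq_add_neg, sub_sub]
    rfl
  rw [eval_charpoly, hconj, det_conj_of_mul_eq_one (Unitary.mul_star_self_of_mem U.2)
    (Unitary.star_mul_self_of_mem U.2)]

theorem Matrix.IsHermitian.re_eval_charpoly (x : ℝ) :
    (A.charpoly.eval (x : ℂ)).re = ∏ j, (x - hA.eigenvalues j) := by
  rw [hA.charpoly_eq, Polynomial.eval_prod]
  simp [← Complex.ofReal_sub, ← Complex.ofReal_prod]

/-- The implicit function theorem for `(t, x) ↦ Re (A + t B).charpoly(x)` at the simple root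
`(0, λₛ)`; in the eigenbasis of `A` both partial derivatives there are explicit. -/
theorem Matrix.IsHermitian.exists_eigenvalue_branch {B : Matrix ι ι ℂ} (hB : B.IsHermitian)
    {s : ι} (hs : ∀ j ≠ s, hA.eigenvalues j ≠ hA.eigenvalues s) :
    ∃ φ : ℝ → ℝ, φ 0 = hA.eigenvalues s ∧ HasDerivAt φ (hA.eigenproj s * B).trace.re 0 ∧
      ∀ᶠ t in 𝓝 0, φ t ∈ Set.range (hA.add (hB.smul (IsSelfAdjoint.all t))).eigenvalues := by
  set μ := hA.eigenvalues s
  set C := star (hA.eigenvectorUnitary : Matrix ι ι ℂ) * B * hA.eigenvectorUnitary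
  set c := ∏ j ∈ Finset.univ.erase s, (μ - hA.eigenvalues j)
  have hc : c ≠ 0 := Finset.prod_ne_zero_iff.2 fun j hj =>
    sub_ne_zero.2 (hs j (Finset.ne_of_mem_erase hj)).symm
  set P : ℝ × ℝ → ℝ := fun q => ((A + q.1 • B).charpoly.eval (q.2 : ℂ)).re
  have hPx : HasDerivAt (fun x => P (0, x)) c μ := by
    simpa [P, hA.re_eval_charpoly] using hasDerivAt_prod_sub hA.eigenvalues s
  have hPt : HasDerivAt (fun t => P (t, μ)) (-(c * (C s s).re)) 0 := by
    have hdet := hasDerivAt_det_diagonal_add_smul (𝕜 := ℝ)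
      (d := fun j => (μ : ℂ) - hA.eigenvalues j) (s := s) (by simp [μ]) (-C)
    have hP : (fun t => P (t, μ)) = Complex.reCLM ∘ fun t : ℝ =>
        (diagonal (fun j => (μ : ℂ) - hA.eigenvalues j) + t • -C).det :=
      funext fun t => by simp [P, C, hA.eval_charpoly_add_smul]
    rw [hP]
    refine (Complex.reCLM.hasFDerivAt.comp_hasDerivAt (0 : ℝ) hdet).congr_deriv ?_
    simp [c, ← Complex.ofReal_sub, ← Complex.ofReal_prod]
  obtain ⟨φ, hφ₀, hφ', hφP⟩ :=
    (contDiff_re_eval_charpoly_add_smul A B).contDiffAt.exists_implicitFunction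
      (u := (0, μ)) hPt hPx hc
  refine ⟨φ, hφ₀, hφ'.congr_deriv ?_, ?_⟩
  · rw [hA.trace_eigenproj_mul]
    field_simp
    rfl
  · filter_upwards [hφP] with t ht
    have hroot : ∏ j, (φ t - (hA.add (hB.smul (IsSelfAdjoint.all t))).eigenvalues j) = 0 := by
      rw [← re_eval_charpoly]
      simpa [hA.re_eval_charpoly, μ, Finset.prod_eq_zero (Finset.mem_univ s)] using ht
    obtain ⟨j, -, hj⟩ := Finset.prod_eq_zero_iff.1 hroot
    exact ⟨j, (sub_eq_zero.1 hj).symm⟩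

end Eigenvalues

section SortedEigenvalues

variable {N : ℕ} {A : Matrix (Fin N) (Fin N) ℂ} (hA : A.IsHermitian)

theorem eigsDesc_eq_of_strictMono {φ : Fin N → ℝ} (hφ : StrictMono φ)
    (hφA : ∀ q, φ q ∈ Set.range hA.eigenvalues) (r : Fin N) : eigsDesc hA r = φ r.rev := by
  choose τ hτ using hφA
  have hτ_inj : Function.Injective τ := fun a b h => hφ.injective (by rw [← hτ, ← hτ, h])
  set e := Equiv.ofBijective τ (Finite.injective_iff_bijective.1 hτ_inj)
  have he : hA.eigenvalues ∘ e = φ := funext hτ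
  have hsort := (Tuple.comp_sort_eq_comp_iff_monotone (σ := e)).2 (he ▸ hφ.monotone)
  rw [he] at hsort
  exact congrFun hsort.symm r.rev

/-- Near `t = 0` the eigenvalue branches through the simple eigenvalues of `A` stay strictly
ordered, so they are the sorted eigenvalues of `A + t B`. -/
theorem hasDerivAt_eigsDesc {B : Matrix (Fin N) (Fin N) ℂ} (hB : B.IsHermitian)
    (hA' : Function.Injective hA.eigenvalues) (r : Fin N) :
    HasDerivAt (fun t : ℝ => eigsDesc (hA.add (hB.smul (IsSelfAdjoint.all t))) r)
      (hA.eigenproj (Tuple.sort hA.eigenvalues r.rev) * B).trace.re 0 := by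
  choose φ hφ₀ hφ' hφ using fun q => hA.exists_eigenvalue_branch hB
    (s := Tuple.sort hA.eigenvalues q) fun j hj => hA'.ne hj
  have hmono₀ : StrictMono fun q => φ q 0 := by
    simp only [hφ₀]
    exact (Tuple.monotone_sort _).strictMono_of_injective (hA'.comp (Equiv.injective _))
  have hmono := eventually_strictMono_of_continuousAt (fun q => (hφ' q).continuousAt) hmono₀
  refine (hφ' r.rev).congr_of_eventuallyEq ?_
  filter_upwards [hmono, eventually_all.2 hφ] with t hmono_t hφ_t
  exact eigsDesc_eq_of_strictMono _ hmono_t hφ_t r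

noncomputable def Matrix.IsHermitian.topEigenproj (i : Fin N) : Matrix (Fin N) (Fin N) ℂ :=
  ∑ r ∈ Finset.Iic i, hA.eigenproj (Tuple.sort hA.eigenvalues r.rev)

theorem Matrix.IsHermitian.isHermitian_topEigenproj (i : Fin N) :
    (hA.topEigenproj i).IsHermitian :=
  isSelfAdjoint_sum _ fun _ _ => hA.isHermitian_eigenproj _

theorem Matrix.IsHermitian.commute_topEigenproj (i : Fin N) : Commute A (hA.topEigenproj i) :=
  Commute.sum_right _ _ _ fun _ _ => hA.commute_eigenproj _

theorem hasDerivAt_lMap {B : Matrix (Fin N) (Fin N) ℂ} (hB : B.IsHermitian)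
    (hA' : Function.Injective hA.eigenvalues) (i : Fin N) :
    HasDerivAt (fun t : ℝ => lMap (hA.add (hB.smul (IsSelfAdjoint.all t))) i)
      (hA.topEigenproj i * B).trace.re 0 := by
  simp only [lMap, Matrix.IsHermitian.topEigenproj, Finset.sum_mul, trace_sum, Complex.re_sum]
  exact HasDerivAt.fun_sum fun r _ => hasDerivAt_eigsDesc hA hB hA' r

end SortedEigenvalues

section Inclusion

def Matrix.inclusion (R : Type*) {ι κ : Type*} [Zero R] [One R] [DecidableEq κ] (e : ι → κ) :
    Matrix κ ι R :=
  (1 : Matrix κ κ R).submatrix id e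

variable {R ι κ : Type*} [CommSemiring R] [Fintype κ] [DecidableEq κ]

theorem Matrix.mul_inclusion {ο : Type*} (e : ι → κ) (M : Matrix ο κ R) :
    M * inclusion R e = M.submatrix id e := by
  ext a c
  simp [inclusion, Matrix.mul_apply, one_apply]

theorem Matrix.inclusion_comp {μ : Type*} [Fintype μ] [DecidableEq μ] (e : ι → κ) (f : κ → μ) :
    inclusion R (f ∘ e) = inclusion R f * inclusion R e := by
  rw [mul_inclusion]; rfl

variable [StarRing R]

theorem Matrix.conjTranspose_inclusion_mul {ο : Type*} (e : ι → κ) (M : Matrix κ ο R) :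
    (inclusion R e)ᴴ * M = M.submatrix e id := by
  ext a c
  simp [inclusion, Matrix.mul_apply, one_apply]

theorem Matrix.conjTranspose_inclusion_mul_mul_inclusion (e : ι → κ) (M : Matrix κ κ R) :
    (inclusion R e)ᴴ * M * inclusion R e = M.submatrix e e := by
  rw [mul_inclusion, conjTranspose_inclusion_mul, submatrix_submatrix]; rfl

theorem Matrix.conjTranspose_inclusion_mul_inclusion [DecidableEq ι] {e : ι → κ}
    (he : Function.Injective e) : (inclusion R e)ᴴ * inclusion R e = 1 := by
  rw [← Matrix.mul_one (inclusion R e)ᴴ, conjTranspose_inclusion_mul_mul_inclusion,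
    submatrix_one _ he]

theorem Matrix.trace_inclusion_mul_mul_conjTranspose_mul [Fintype ι] (e : ι → κ)
    (P : Matrix ι ι R) (M : Matrix κ κ R) :
    (inclusion R e * P * (inclusion R e)ᴴ * M).trace = (P * M.submatrix e e).trace := by
  rw [← conjTranspose_inclusion_mul_mul_inclusion, Matrix.mul_assoc, Matrix.mul_assoc,
    trace_mul_comm]
  simp only [Matrix.mul_assoc]

end Inclusion

theorem Matrix.trace_mul_commutator_eq_zero {R ι : Type*} [CommRing R] [Fintype ι]
    {C Q : Matrix ι ι R} (hCQ : Commute C Q) (P : Matrix ι ι R) :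
    (C * (P * Q - Q * P)).trace = 0 := by
  rw [Matrix.mul_sub, trace_sub, ← Matrix.mul_assoc, trace_mul_comm, ← Matrix.mul_assoc Q,
    ← hCQ.eq, Matrix.mul_assoc, sub_self]

theorem Matrix.trace_mul_commutator_conj {R ι κ : Type*} [CommRing R] [StarRing R] [Fintype ι]
    [Fintype κ] [DecidableEq ι] {E : Matrix κ ι R} (hE : Eᴴ * E = 1) (K : Matrix κ κ R)
    (P Q : Matrix ι ι R) :
    (K * (E * P * Eᴴ * (E * Q * Eᴴ) - E * Q * Eᴴ * (E * P * Eᴴ))).trace =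
      (Eᴴ * K * E * (P * Q - Q * P)).trace := by
  have hprod : ∀ X Y : Matrix ι ι R, E * X * Eᴴ * (E * Y * Eᴴ) = E * (X * Y) * Eᴴ := fun X Y => by
    simp only [Matrix.mul_assoc]; rw [← Matrix.mul_assoc Eᴴ E, hE, Matrix.one_mul]
  rw [hprod, hprod, ← Matrix.sub_mul, ← Matrix.mul_sub, ← Matrix.mul_assoc, trace_mul_cycle]
  simp only [Matrix.mul_assoc]

open ComplexOrder in
theorem IsHermGradientAt.unique {n : ℕ} {f : Matrix (Fin n) (Fin n) ℂ → ℝ}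
    {K G G' : Matrix (Fin n) (Fin n) ℂ} (h : IsHermGradientAt f K G)
    (h' : IsHermGradientAt f K G') : G = G' := by
  set D := G - G'
  have hD : D.IsHermitian := h.1.sub h'.1
  have hre : (Dᴴ * D).trace.re = 0 := by
    rw [hD.eq, Matrix.sub_mul, trace_sub, Complex.sub_re, (h.2 D hD).unique (h'.2 D hD), sub_self]
  have him : (Dᴴ * D).trace.im = 0 :=
    (Complex.nonneg_iff.1 (posSemidef_conjTranspose_mul_self D).trace_nonneg).2.symm
  exact sub_eq_zero.1 (trace_conjTranspose_mul_self_eq_zero_iff.1 (Complex.ext hre him))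

section GelfandZeitlin

variable {n : ℕ} {K : Matrix (Fin n) (Fin n) ℂ} (hK : K.IsHermitian)

noncomputable def lkiGradient {k : ℕ} (hkn : k ≤ n) (i : Fin k) : Matrix (Fin n) (Fin n) ℂ :=
  inclusion ℂ (Fin.castLE hkn) * (hK.submatrix (Fin.castLE hkn)).topEigenproj i *
    (inclusion ℂ (Fin.castLE hkn))ᴴ

theorem isHermGradientAt_lki {k i : ℕ} (hi1 : 1 ≤ i) (hik : i ≤ k) (hkn : k ≤ n)
    (hK' : Function.Injective (hK.submatrix (Fin.castLE hkn)).eigenvalues) :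
    IsHermGradientAt (lki k i) K (lkiGradient hK hkn ⟨i - 1, by omega⟩) := by
  refine ⟨isHermitian_mul_mul_conjTranspose _ (Matrix.IsHermitian.isHermitian_topEigenproj _ _),
    fun X hX => ?_⟩
  have hpath : (fun t : ℝ => lki k i (K + t • X)) = fun t : ℝ =>
      lMap ((hK.submatrix (Fin.castLE hkn)).add ((hX.submatrix (Fin.castLE hkn)).smul
        (IsSelfAdjoint.all t))) ⟨i - 1, by omega⟩ := by
    funext t
    rw [lki, dif_pos ⟨hi1, hik, hkn⟩]
    exact dif_pos ((hK.add (hX.smul (IsSelfAdjoint.all t))).submatrix _)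
  rw [hpath]
  refine (hasDerivAt_lMap _ (hX.submatrix _) hK' _).congr_deriv ?_
  rw [lkiGradient, trace_inclusion_mul_mul_conjTranspose_mul]

/-- For `k ≤ m` both gradients are supported on the top-left `m × m` block, and there the
second one commutes with `K^{(m)}`. -/
theorem trace_mul_commutator_lkiGradient {k m : ℕ} (hkn : k ≤ n) (hmn : m ≤ n) (i : Fin k)
    (j : Fin m) :
    (K * (lkiGradient hK hkn i * lkiGradient hK hmn j -
      lkiGradient hK hmn j * lkiGradient hK hkn i)).trace = 0 := by
  wlog hkm : k ≤ m generalizing k m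
  · rw [← neg_sub, Matrix.mul_neg, trace_neg, this hmn hkn j i (le_of_not_ge hkm), neg_zero]
  have hincl : inclusion ℂ (Fin.castLE hkn) =
      inclusion ℂ (Fin.castLE hmn) * inclusion ℂ (Fin.castLE hkm) := by
    rw [← inclusion_comp]; rfl
  have hf : lkiGradient hK hkn i = inclusion ℂ (Fin.castLE hmn) * (inclusion ℂ (Fin.castLE hkm) *
      (hK.submatrix (Fin.castLE hkn)).topEigenproj i * (inclusion ℂ (Fin.castLE hkm))ᴴ) *
      (inclusion ℂ (Fin.castLE hmn))ᴴ := by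
    rw [lkiGradient, hincl, conjTranspose_mul]; simp only [Matrix.mul_assoc]
  rw [hf, lkiGradient, trace_mul_commutator_conj
      (conjTranspose_inclusion_mul_inclusion (Fin.castLE_injective hmn)),
    conjTranspose_inclusion_mul_mul_inclusion]
  exact trace_mul_commutator_eq_zero ((hK.submatrix _).commute_topEigenproj j) _

end GelfandZeitlin

theorem gelfandZeitlin_poisson_commute_general (n : ℕ)
    {K : Matrix (Fin n) (Fin n) ℂ} (hK : K.IsHermitian)
    (hdistinct : ∀ (k : ℕ) (hk : k ≤ n), 1 ≤ k →
      Function.Injective (hK.submatrix (Fin.castLE hk)).eigenvalues)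
    (k i m j : ℕ) (hi1 : 1 ≤ i) (hik : i ≤ k) (hkn : k ≤ n)
    (hj1 : 1 ≤ j) (hjm : j ≤ m) (hmn : m ≤ n) :
    (∃ G, IsHermGradientAt (lki k i) K G) ∧
    (∃ G, IsHermGradientAt (lki m j) K G) ∧
    (∀ Gf Gg : Matrix (Fin n) (Fin n) ℂ,
      IsHermGradientAt (lki k i) K Gf → IsHermGradientAt (lki m j) K Gg →
      ((K * (Gf * Gg - Gg * Gf)).trace).im = 0) := by
  have hf := isHermGradientAt_lki hK hi1 hik hkn (hdistinct k hkn (hi1.trans hik))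
  have hg := isHermGradientAt_lki hK hj1 hjm hmn (hdistinct m hmn (hj1.trans hjm))
  refine ⟨⟨_, hf⟩, ⟨_, hg⟩, fun Gf Gg hGf hGg => ?_⟩
  rw [hGf.unique hf, hGg.unique hg, trace_mul_commutator_lkiGradient, Complex.zero_im]

/-- Guillemin–Sternberg: at a Hermitian matrix `K` all of whose principal submatrices
have distinct eigenvalues, the Gelfand–Zeitlin functions `lᵏᵢ` and `lᵐⱼ` are
differentiable (they admit gradients in the sense of `IsHermGradientAt`), and their
Kirillov–Kostant–Souriau Poisson bracket `Im Tr(K·[∇f(K), ∇g(K)])` vanishes at `K`. -/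
theorem gelfandZeitlin_poisson_commute (n : ℕ) (hn : 0 < n)
    {K : Matrix (Fin n) (Fin n) ℂ} (hK : K.IsHermitian)
    (hdistinct : ∀ (k : ℕ) (hk : k ≤ n), 1 ≤ k →
      Function.Injective (hK.submatrix (Fin.castLE hk)).eigenvalues)
    (k i m j : ℕ) (hi1 : 1 ≤ i) (hik : i ≤ k) (hkn : k ≤ n)
    (hj1 : 1 ≤ j) (hjm : j ≤ m) (hmn : m ≤ n) :
    (∃ G, IsHermGradientAt (lki k i) K G) ∧
    (∃ G, IsHermGradientAt (lki m j) K G) ∧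
    (∀ Gf Gg : Matrix (Fin n) (Fin n) ℂ,
      IsHermGradientAt (lki k i) K Gf → IsHermGradientAt (lki m j) K Gg →
      ((K * (Gf * Gg - Gg * Gf)).trace).im = 0) :=
  gelfandZeitlin_poisson_commute_general n hK hdistinct k i m j hi1 hik hkn hj1 hjm hmn
end
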